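/- Let R be a subsemiring of ℝ≥0 containing the non-negative rationals ℚ≥0, let N ∈ R with N > 0, and let k ≥ 1 be a natural number. Then the supremum of ct^k_R(E) over all finite R-labelled directed graphs E of weight N without loops of length strictly less than k equals k·(N/k)^k, and it is achieved by the R-labelled loop (f₁,…,f_k) of length k on k pairwise distinct vertices with all labels equal to N/k. -/
import Mathlib


/-- An `R`-labelled directed graph: vertices, edges, source/target maps and a label map. -/
structure LGraph (R : Type) where
  V : Type
  E : Type
  s : E → V
  t : E → V
  l : E → R

namespace LGraph

variable {R : Type}

/-- `p = (e₁, …, e_k)` is a path of length `k`: `t eᵢ = s eᵢ₊₁` for `1 ≤ i < k`. -/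
def IsPath (G : LGraph R) {k : ℕ} (p : Fin k → G.E) : Prop :=
  ∀ (i : ℕ) (hi : i + 1 < k), G.t (p ⟨i, by omega⟩) = G.s (p ⟨i + 1, hi⟩)

/-- A loop is a (nonempty) path whose source equals its target. -/
def IsLoop (G : LGraph R) {k : ℕ} (p : Fin k → G.E) : Prop :=
  G.IsPath p ∧ ∃ hk : 0 < k, G.s (p ⟨0, hk⟩) = G.t (p ⟨k - 1, by omega⟩)

/-- No repeated edges: edges are determined by their source and target. -/
def NoRepeats (G : LGraph R) : Prop :=
  ∀ e f : G.E, G.s e = G.s f → G.t e = G.t f → e = f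

/-- The weight of a labelled graph: the sum of all labels. -/
noncomputable def wt [CommSemiring R] (G : LGraph R) : R :=
  ∑ᶠ e : G.E, G.l e

/-- The `k`-content of a labelled graph: the sum, over all paths `p` of length `k`,
of the product of the labels of the edges of `p`. -/
noncomputable def ct [CommSemiring R] (G : LGraph R) (k : ℕ) : R :=
  ∑ᶠ p : {p : Fin k → G.E // G.IsPath p}, ∏ i, G.l (p.1 i)

/-- The Chirvasitu property for `k`-paths: every two edges belong to a common
path of length `k`. -/
def Chirvasitu (G : LGraph R) (k : ℕ) : Prop :=
  ∀ e f : G.E, ∃ p : Fin k → G.E, G.IsPath p ∧ (∃ i, p i = e) ∧ (∃ i, p i = f)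

end LGraph

namespace CtAux

open LGraph Finset

lemma pmk_eq {R : Type} (G : LGraph R) {k : ℕ} (p : Fin k → G.E) {a b : ℕ}
    (ha : a < k) (hb : b < k) (h : a = b) : p ⟨a, ha⟩ = p ⟨b, hb⟩ := by
  subst h; rfl

variable {k : ℕ} {G : LGraph ℝ}

/-- vertex sequence of a path -/
noncomputable def vtx (G : LGraph ℝ) (hk0 : 0 < k) (p : Fin k → G.E) (i : ℕ) : G.V :=
  if h : i < k then G.s (p ⟨i, h⟩) else G.t (p ⟨k - 1, by omega⟩)

lemma vtx_s (hk0 : 0 < k) (p : Fin k → G.E) {i : ℕ} (h : i < k) :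
    vtx G hk0 p i = G.s (p ⟨i, h⟩) := dif_pos h

lemma vtx_t (hk0 : 0 < k) {p : Fin k → G.E} (hp : G.IsPath p) {i : ℕ} (h : i < k) :
    vtx G hk0 p (i + 1) = G.t (p ⟨i, h⟩) := by
  by_cases h' : i + 1 < k
  · rw [vtx, dif_pos h']
    exact (hp i h').symm
  · rw [vtx, dif_neg h']
    exact congrArg G.t (pmk_eq G p (by omega) h (by omega))

lemma vtx_ne (hk0 : 0 < k)
    (hloop : ∀ (m : ℕ) (q : Fin m → G.E), m < k → ¬ G.IsLoop q)
    {p : Fin k → G.E} (hp : G.IsPath p) {a b : ℕ} (hab : a < b) (hbk : b ≤ k)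
    (hlen : b - a < k) : vtx G hk0 p a ≠ vtx G hk0 p b := by
  intro hv
  refine hloop (b - a) (fun d => p ⟨a + d.1, by omega⟩) hlen ⟨?_, by omega, ?_⟩
  · intro d hd
    exact hp (a + d) (by omega)
  · show G.s (p ⟨a + 0, _⟩) = G.t (p ⟨a + (b - a - 1), _⟩)
    calc G.s (p ⟨a + 0, by omega⟩) = vtx G hk0 p a := by
          rw [vtx_s hk0 p (show a < k by omega)]
          exact congrArg G.s (pmk_eq G p _ _ (by omega))
      _ = vtx G hk0 p b := hv
      _ = G.t (p ⟨b - 1, by omega⟩) := by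
          have := vtx_t hk0 hp (show b - 1 < k by omega)
          rw [show b - 1 + 1 = b by omega] at this
          exact this
      _ = G.t (p ⟨a + (b - a - 1), by omega⟩) :=
          congrArg G.t (pmk_eq G p _ _ (by omega))

lemma src_inj (hk0 : 0 < k)
    (hloop : ∀ (m : ℕ) (q : Fin m → G.E), m < k → ¬ G.IsLoop q)
    {p : Fin k → G.E} (hp : G.IsPath p) :
    ∀ i j : Fin k, G.s (p i) = G.s (p j) → i = j := by
  have main : ∀ i j : Fin k, (i : ℕ) < (j : ℕ) → G.s (p i) ≠ G.s (p j) := by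
    intro i j hij hs
    refine vtx_ne hk0 hloop hp hij (le_of_lt j.isLt) (by omega) ?_
    rw [vtx_s hk0 p i.isLt, vtx_s hk0 p j.isLt]
    rw [show (⟨(i:ℕ), i.isLt⟩ : Fin k) = i from rfl, show (⟨(j:ℕ), j.isLt⟩ : Fin k) = j from rfl]
    exact hs
  intro i j h
  rcases lt_trichotomy (i : ℕ) (j : ℕ) with h' | h' | h'
  · exact absurd h (main i j h')
  · exact Fin.ext h'
  · exact absurd h.symm (main j i h')

lemma tgt_inj (hk0 : 0 < k)
    (hloop : ∀ (m : ℕ) (q : Fin m → G.E), m < k → ¬ G.IsLoop q)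
    {p : Fin k → G.E} (hp : G.IsPath p) :
    ∀ i j : Fin k, G.t (p i) = G.t (p j) → i = j := by
  have main : ∀ i j : Fin k, (i : ℕ) < (j : ℕ) → G.t (p i) ≠ G.t (p j) := by
    intro i j hij ht
    refine vtx_ne hk0 hloop hp (show (i:ℕ)+1 < (j:ℕ)+1 by omega) (by omega) (by omega) ?_
    rw [vtx_t hk0 hp i.isLt, vtx_t hk0 hp j.isLt]
    rw [show (⟨(i:ℕ), i.isLt⟩ : Fin k) = i from rfl, show (⟨(j:ℕ), j.isLt⟩ : Fin k) = j from rfl]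
    exact ht
  intro i j h
  rcases lt_trichotomy (i : ℕ) (j : ℕ) with h' | h' | h'
  · exact absurd h (main i j h')
  · exact Fin.ext h'
  · exact absurd h.symm (main j i h')

lemma path_inj (hk0 : 0 < k)
    (hloop : ∀ (m : ℕ) (q : Fin m → G.E), m < k → ¬ G.IsLoop q)
    {p : Fin k → G.E} (hp : G.IsPath p) : Function.Injective p := by
  intro i j h
  exact src_inj hk0 hloop hp i j (congrArg G.s h)

lemma amgm (hk0 : 0 < k) (z : Fin k → ℝ) (hz : ∀ i, 0 ≤ z i) :
    ∏ i, z i ≤ ((∑ i, z i) / k) ^ k := by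
  have hk' : (k : ℝ) ≠ 0 := Nat.cast_ne_zero.2 (by omega)
  have h1 : ∑ _i : Fin k, (1 / k : ℝ) = 1 := by
    rw [Finset.sum_const, card_univ, Fintype.card_fin, nsmul_eq_mul]
    field_simp
  have hgm := Real.geom_mean_le_arith_mean_weighted Finset.univ (fun _ => (1 / k : ℝ)) z
    (fun i _ => by positivity) h1 (fun i _ => hz i)
  have hrhs : ∑ i, (1 / k : ℝ) * z i = (∑ i, z i) / k := by
    rw [← Finset.mul_sum]; ring
  rw [hrhs] at hgm
  have hLnn : 0 ≤ ∏ i, z i ^ (1 / k : ℝ) :=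
    Finset.prod_nonneg fun i _ => Real.rpow_nonneg (hz i) _
  have := pow_le_pow_left₀ hLnn hgm k
  calc ∏ i, z i = (∏ i, z i ^ (1 / k : ℝ)) ^ k := by
        rw [← Finset.prod_pow]
        refine (Finset.prod_congr rfl fun i _ => ?_).symm
        rw [← Real.rpow_natCast (z i ^ (1/k:ℝ)) k, ← Real.rpow_mul (hz i)]
        rw [show (1/k : ℝ) * k = 1 by field_simp, Real.rpow_one]
    _ ≤ ((∑ i, z i) / k) ^ k := this

lemma pow_bound {s N : ℝ} (hk0 : 0 < k) (hs : 0 ≤ s) (hsN : s ≤ N) (hN : 0 < N) :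
    (s / k) ^ k ≤ (N / k) ^ k * (s / N) := by
  have hkR : (0:ℝ) < k := by exact_mod_cast hk0
  have key : s ^ k * N ≤ N ^ k * s := by
    have h2 : s ^ (k-1) ≤ N ^ (k-1) := pow_le_pow_left₀ hs hsN _
    calc s ^ k * N = s ^ (k-1) * s * N := by
          rw [← pow_succ]; congr 2; omega
      _ ≤ N ^ (k-1) * s * N :=
          mul_le_mul_of_nonneg_right (mul_le_mul_of_nonneg_right h2 hs) hN.le
      _ = N ^ k * s := by
          rw [show N ^ (k-1) * s * N = N ^ (k-1) * N * s by ring, ← pow_succ]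
          congr 2; omega
  rw [div_pow, div_pow, div_mul_div_comm, div_le_div_iff₀ (by positivity) (by positivity)]
  calc s ^ k * ((k:ℝ)^k * N) = s ^ k * N * (k:ℝ)^k := by ring
    _ ≤ N ^ k * s * (k:ℝ)^k := mul_le_mul_of_nonneg_right key (by positivity)


open scoped Classical in
lemma key_zero (hk0 : 0 < k) (G : LGraph ℝ) [Fintype G.E] (x : G.E → ℝ)
    (hzero : ∀ e, x e = 0) :
    ∑ p : {p : Fin k → G.E // G.IsPath p}, ∏ i, x (p.1 i)
      ≤ k * ((∑ e, x e) / k) ^ k := by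
  have hL : ∑ p : {p : Fin k → G.E // G.IsPath p}, ∏ i, x (p.1 i) = 0 :=
    Finset.sum_eq_zero fun p _ =>
      Finset.prod_eq_zero (Finset.mem_univ (⟨0, hk0⟩ : Fin k)) (hzero _)
  have hR : (∑ e, x e) = 0 := Finset.sum_eq_zero fun e _ => hzero e
  rw [hL, hR]
  rw [zero_div, zero_pow (by omega : k ≠ 0), mul_zero]

open scoped Classical in
lemma key (k : ℕ) (hk : 1 ≤ k) :
    ∀ (n : ℕ) (G : LGraph ℝ) [inst : Fintype G.E],
      (∀ (m : ℕ) (q : Fin m → G.E), m < k → ¬ G.IsLoop q) →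
      ∀ x : G.E → ℝ, (∀ e, 0 ≤ x e) →
      (Finset.univ.filter fun e => x e ≠ 0).card ≤ n →
      ∑ p : {p : Fin k → G.E // G.IsPath p}, ∏ i, x (p.1 i)
        ≤ k * ((∑ e, x e) / k) ^ k := by
  have hk0 : 0 < k := hk
  intro n
  induction n with
  | zero =>
    intro G inst hloop x hx hcard
    refine key_zero hk0 G x fun e => ?_
    by_contra he
    have hmem : e ∈ Finset.univ.filter fun e => x e ≠ 0 := by
      simp only [Finset.mem_filter, Finset.mem_univ, true_and]; exact he
    have := Finset.card_pos.2 ⟨e, hmem⟩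
    omega
  | succ n ih =>
    intro G inst hloop x hx hcard
    by_cases hD : ∀ e f : G.E, x e ≠ 0 → x f ≠ 0 → e ≠ f →
        ∃ p : Fin k → G.E, G.IsPath p ∧ (∀ i, x (p i) ≠ 0) ∧
          (∃ i, p i = e) ∧ (∃ i, p i = f)
    · -- Chirvasitu-like case
      by_cases hzero : ∀ e : G.E, x e = 0
      · exact key_zero hk0 G x hzero
      push_neg at hzero
      obtain ⟨e₀, he₀⟩ := hzero
      set N := ∑ e, x e with hNdef
      have hNpos : 0 < N := by
        have h1 : x e₀ ≤ N := Finset.single_le_sum (fun e _ => hx e) (Finset.mem_univ e₀)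
        have h2 : 0 < x e₀ := (hx e₀).lt_of_ne (Ne.symm he₀)
        linarith
      have Hs : ∀ e f : G.E, x e ≠ 0 → x f ≠ 0 → G.s e = G.s f → e = f := by
        intro e f he hf hsef
        by_contra hne
        obtain ⟨p, hp, _, ⟨i, hi⟩, ⟨j, hj⟩⟩ := hD e f he hf hne
        have hij : i = j := src_inj hk0 hloop hp i j (by rw [hi, hj]; exact hsef)
        rw [hij] at hi
        exact hne (hi.symm.trans hj)
      have Ht : ∀ e f : G.E, x e ≠ 0 → x f ≠ 0 → G.t e = G.t f → e = f := by
        intro e f he hf htef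
        by_contra hne
        obtain ⟨p, hp, _, ⟨i, hi⟩, ⟨j, hj⟩⟩ := hD e f he hf hne
        have hij : i = j := tgt_inj hk0 hloop hp i j (by rw [hi, hj]; exact htef)
        rw [hij] at hi
        exact hne (hi.symm.trans hj)
      have Huniq : ∀ p q : Fin k → G.E, G.IsPath p → G.IsPath q →
          (∀ i, x (p i) ≠ 0) → (∀ i, x (q i) ≠ 0) →
          ∀ i₀ : Fin k, p i₀ = q i₀ → p = q := by
        intro p q hp hq hxp hxq i₀ h0
        have hi₀k := i₀.isLt
        have fwd : ∀ d, ∀ h : (i₀ : ℕ) + d < k, p ⟨(i₀:ℕ) + d, h⟩ = q ⟨(i₀:ℕ) + d, h⟩ := by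
          intro d
          induction d with
          | zero => exact fun _ => h0
          | succ d hd =>
            intro h
            have h' : (i₀:ℕ) + d < k := by omega
            refine Hs _ _ (hxp _) (hxq _) ?_
            show G.s (p ⟨(i₀:ℕ) + d + 1, h⟩) = G.s (q ⟨(i₀:ℕ) + d + 1, h⟩)
            calc G.s (p ⟨(i₀:ℕ) + d + 1, h⟩) = G.t (p ⟨(i₀:ℕ) + d, by omega⟩) :=
                  (hp ((i₀:ℕ) + d) h).symm
              _ = G.t (q ⟨(i₀:ℕ) + d, by omega⟩) := congrArg G.t (hd h')
              _ = G.s (q ⟨(i₀:ℕ) + d + 1, h⟩) := hq ((i₀:ℕ) + d) h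
        have bwd : ∀ d, d ≤ (i₀ : ℕ) →
            p ⟨(i₀:ℕ) - d, by omega⟩ = q ⟨(i₀:ℕ) - d, by omega⟩ := by
          intro d
          induction d with
          | zero => exact fun _ => h0
          | succ d hd =>
            intro h
            refine Ht _ _ (hxp _) (hxq _) ?_
            calc G.t (p ⟨(i₀:ℕ) - (d+1), by omega⟩)
                = G.s (p ⟨(i₀:ℕ) - (d+1) + 1, by omega⟩) := hp ((i₀:ℕ) - (d+1)) (by omega)
              _ = G.s (p ⟨(i₀:ℕ) - d, by omega⟩) := congrArg G.s (pmk_eq G p _ _ (by omega))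
              _ = G.s (q ⟨(i₀:ℕ) - d, by omega⟩) := congrArg G.s (hd (by omega))
              _ = G.s (q ⟨(i₀:ℕ) - (d+1) + 1, by omega⟩) := congrArg G.s (pmk_eq G q _ _ (by omega))
              _ = G.t (q ⟨(i₀:ℕ) - (d+1), by omega⟩) := (hq ((i₀:ℕ) - (d+1)) (by omega)).symm
        funext i
        have hik := i.isLt
        rcases le_or_gt (i₀ : ℕ) (i : ℕ) with hle | hlt
        · have hfd := fwd ((i:ℕ) - (i₀:ℕ)) (by omega)
          have hmk : (⟨(i₀:ℕ) + ((i:ℕ) - (i₀:ℕ)), by omega⟩ : Fin k) = i :=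
            Fin.ext (show (i₀:ℕ) + ((i:ℕ) - (i₀:ℕ)) = (i:ℕ) by omega)
          rw [← hmk]
          exact hfd
        · have hbd := bwd ((i₀:ℕ) - (i:ℕ)) (by omega)
          have hmk : (⟨(i₀:ℕ) - ((i₀:ℕ) - (i:ℕ)), by omega⟩ : Fin k) = i :=
            Fin.ext (show (i₀:ℕ) - ((i₀:ℕ) - (i:ℕ)) = (i:ℕ) by omega)
          rw [← hmk]
          exact hbd
      set T : Finset {p : Fin k → G.E // G.IsPath p} :=
        Finset.univ.filter (fun p => ∀ i, x (p.1 i) ≠ 0) with hTdef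
      have hsum0 : ∑ p : {p : Fin k → G.E // G.IsPath p}, ∏ i, x (p.1 i)
          = ∑ p ∈ T, ∏ i, x (p.1 i) := by
        symm
        apply Finset.sum_filter_of_ne
        intro p _ hne i hxi
        exact hne (Finset.prod_eq_zero (Finset.mem_univ i) hxi)
      have hstep : ∀ p ∈ T, ∏ i, x (p.1 i) ≤ (N / k) ^ k * ((∑ i, x (p.1 i)) / N) := by
        intro p _
        have pinj : Function.Injective p.1 := path_inj hk0 hloop p.2
        have hSnn : 0 ≤ ∑ i, x (p.1 i) := Finset.sum_nonneg fun i _ => hx _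
        have hSN : ∑ i, x (p.1 i) ≤ N := by
          rw [← Finset.sum_image (fun i _ j _ h => pinj h)]
          exact Finset.sum_le_sum_of_subset_of_nonneg (Finset.subset_univ _)
            (fun e _ _ => hx e)
        calc ∏ i, x (p.1 i) ≤ ((∑ i, x (p.1 i)) / k) ^ k := amgm hk0 _ (fun i => hx _)
          _ ≤ (N / k) ^ k * ((∑ i, x (p.1 i)) / N) := pow_bound hk0 hSnn hSN hNpos
      have hTsum : ∀ i : Fin k, (∑ p ∈ T, x (p.1 i)) ≤ N := by
        intro i
        have hinj : ∀ p ∈ T, ∀ q ∈ T, p.1 i = q.1 i → p = q := by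
          intro p hp q hq hpq
          have hp' := (Finset.mem_filter.1 hp).2
          have hq' := (Finset.mem_filter.1 hq).2
          exact Subtype.ext (Huniq p.1 q.1 p.2 q.2 hp' hq' i hpq)
        rw [← Finset.sum_image hinj]
        exact Finset.sum_le_sum_of_subset_of_nonneg (Finset.subset_univ _)
          (fun e _ _ => hx e)
      have hNk : (0:ℝ) < (N/k)^k / N := by
        have : (0:ℝ) < k := by exact_mod_cast hk0
        positivity
      calc ∑ p : {p : Fin k → G.E // G.IsPath p}, ∏ i, x (p.1 i)
          = ∑ p ∈ T, ∏ i, x (p.1 i) := hsum0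
        _ ≤ ∑ p ∈ T, (N / k) ^ k * ((∑ i, x (p.1 i)) / N) := Finset.sum_le_sum hstep
        _ = (N / k) ^ k / N * ∑ p ∈ T, ∑ i, x (p.1 i) := by
            rw [Finset.mul_sum]
            exact Finset.sum_congr rfl fun p _ => by ring
        _ = (N / k) ^ k / N * ∑ i : Fin k, ∑ p ∈ T, x (p.1 i) := by
            rw [Finset.sum_comm]
        _ ≤ (N / k) ^ k / N * (k * N) := by
            refine mul_le_mul_of_nonneg_left ?_ hNk.le
            calc ∑ i : Fin k, ∑ p ∈ T, x (p.1 i) ≤ ∑ _i : Fin k, N :=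
                  Finset.sum_le_sum fun i _ => hTsum i
              _ = k * N := by
                  rw [Finset.sum_const, Finset.card_univ, Fintype.card_fin, nsmul_eq_mul]
        _ = k * (N / k) ^ k := by field_simp
    · -- weight-shifting case
      push_neg at hD
      obtain ⟨e, f, he, hf, hef, hno⟩ := hD
      have ha : 0 < x e := (hx e).lt_of_ne (Ne.symm he)
      have hb : 0 < x f := (hx f).lt_of_ne (Ne.symm hf)
      have hab : 0 < x e + x f := by linarith
      set x₁ := Function.update (Function.update x e (x e + x f)) f 0 with hx₁def
      set x₂ := Function.update (Function.update x f (x e + x f)) e 0 with hx₂def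
      have hx₁e : x₁ e = x e + x f := by
        rw [hx₁def, Function.update_of_ne hef, Function.update_self]
      have hx₁f : x₁ f = 0 := by rw [hx₁def, Function.update_self]
      have hx₁g : ∀ g, g ≠ e → g ≠ f → x₁ g = x g := by
        intro g hge hgf
        rw [hx₁def, Function.update_of_ne hgf, Function.update_of_ne hge]
      have hx₂f : x₂ f = x e + x f := by
        rw [hx₂def, Function.update_of_ne (Ne.symm hef), Function.update_self]
      have hx₂e : x₂ e = 0 := by rw [hx₂def, Function.update_self]
      have hx₂g : ∀ g, g ≠ e → g ≠ f → x₂ g = x g := by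
        intro g hge hgf
        rw [hx₂def, Function.update_of_ne hge, Function.update_of_ne hgf]
      have hx₁nn : ∀ g, 0 ≤ x₁ g := by
        intro g
        by_cases h1 : g = f
        · rw [h1, hx₁f]
        by_cases h2 : g = e
        · rw [h2, hx₁e]; linarith
        · rw [hx₁g g h2 h1]; exact hx g
      have hx₂nn : ∀ g, 0 ≤ x₂ g := by
        intro g
        by_cases h1 : g = e
        · rw [h1, hx₂e]
        by_cases h2 : g = f
        · rw [h2, hx₂f]; linarith
        · rw [hx₂g g h1 h2]; exact hx g
      have hmemef : e ∈ Finset.univ \ {f} := by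
        simp only [Finset.mem_sdiff, Finset.mem_univ, Finset.mem_singleton, true_and]
        exact hef
      have hmemfe : f ∈ Finset.univ \ {e} := by
        simp only [Finset.mem_sdiff, Finset.mem_univ, Finset.mem_singleton, true_and]
        exact Ne.symm hef
      have hs₁ : ∑ g, x₁ g = ∑ g, x g := by
        rw [hx₁def, Finset.sum_update_of_mem (Finset.mem_univ f),
          Finset.sum_update_of_mem hmemef,
          Finset.sum_eq_sum_sdiff_singleton_add (Finset.mem_univ f) x,
          Finset.sum_eq_sum_sdiff_singleton_add hmemef x]
        ring
      have hs₂ : ∑ g, x₂ g = ∑ g, x g := by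
        rw [hx₂def, Finset.sum_update_of_mem (Finset.mem_univ e),
          Finset.sum_update_of_mem hmemfe,
          Finset.sum_eq_sum_sdiff_singleton_add (Finset.mem_univ e) x,
          Finset.sum_eq_sum_sdiff_singleton_add hmemfe x]
        ring
      have hcard₁ : (Finset.univ.filter fun g => x₁ g ≠ 0).card ≤ n := by
        have hsub : (Finset.univ.filter fun g => x₁ g ≠ 0)
            ⊆ (Finset.univ.filter fun g => x g ≠ 0).erase f := by
          intro g hg
          have hg' : x₁ g ≠ 0 := (Finset.mem_filter.1 hg).2
          have hgf : g ≠ f := by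
            intro hh; rw [hh, hx₁f] at hg'; exact hg' rfl
          refine Finset.mem_erase.2 ⟨hgf, Finset.mem_filter.2 ⟨Finset.mem_univ g, ?_⟩⟩
          by_cases hge : g = e
          · rw [hge]; exact he
          · rw [hx₁g g hge hgf] at hg'; exact hg'
        have h1 := Finset.card_le_card hsub
        have hfmem : f ∈ Finset.univ.filter fun g => x g ≠ 0 := by
          simp only [Finset.mem_filter, Finset.mem_univ, true_and]; exact hf
        have h2 := Finset.card_erase_of_mem hfmem
        have h3 := Finset.card_pos.2 ⟨f, hfmem⟩
        omega
      have hcard₂ : (Finset.univ.filter fun g => x₂ g ≠ 0).card ≤ n := by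
        have hsub : (Finset.univ.filter fun g => x₂ g ≠ 0)
            ⊆ (Finset.univ.filter fun g => x g ≠ 0).erase e := by
          intro g hg
          have hg' : x₂ g ≠ 0 := (Finset.mem_filter.1 hg).2
          have hge : g ≠ e := by
            intro hh; rw [hh, hx₂e] at hg'; exact hg' rfl
          refine Finset.mem_erase.2 ⟨hge, Finset.mem_filter.2 ⟨Finset.mem_univ g, ?_⟩⟩
          by_cases hgf : g = f
          · rw [hgf]; exact hf
          · rw [hx₂g g hge hgf] at hg'; exact hg'
        have h1 := Finset.card_le_card hsub
        have hemem : e ∈ Finset.univ.filter fun g => x g ≠ 0 := by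
          simp only [Finset.mem_filter, Finset.mem_univ, true_and]; exact he
        have h2 := Finset.card_erase_of_mem hemem
        have h3 := Finset.card_pos.2 ⟨e, hemem⟩
        omega
      have hpp : ∀ p : {p : Fin k → G.E // G.IsPath p},
          ∏ i, x (p.1 i) = x e / (x e + x f) * ∏ i, x₁ (p.1 i)
            + x f / (x e + x f) * ∏ i, x₂ (p.1 i) := by
        intro p
        have pinj : Function.Injective p.1 := path_inj hk0 hloop p.2
        have hab' : x e + x f ≠ 0 := ne_of_gt hab
        by_cases hpe : ∃ i, p.1 i = e
        · by_cases hpf : ∃ j, p.1 j = f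
          · obtain ⟨i, hi⟩ := hpe
            obtain ⟨j, hj⟩ := hpf
            have hz : ∃ m, x (p.1 m) = 0 := by
              by_contra hcon
              push_neg at hcon
              exact hno p.1 p.2 hcon ⟨i, hi⟩ j hj
            obtain ⟨m, hm⟩ := hz
            have hme : p.1 m ≠ e := by
              intro hh; rw [hh] at hm; exact he hm
            have hmf : p.1 m ≠ f := by
              intro hh; rw [hh] at hm; exact hf hm
            rw [Finset.prod_eq_zero (Finset.mem_univ m) hm,
              Finset.prod_eq_zero (Finset.mem_univ m)
                (show x₁ (p.1 m) = 0 by rw [hx₁g _ hme hmf]; exact hm),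
              Finset.prod_eq_zero (Finset.mem_univ m)
                (show x₂ (p.1 m) = 0 by rw [hx₂g _ hme hmf]; exact hm)]
            ring
          · obtain ⟨i₀, hi₀⟩ := hpe
            push_neg at hpf
            have hfac : ∀ y : G.E → ℝ, ∏ i, y (p.1 i)
                = y (p.1 i₀) * ∏ i ∈ Finset.univ.erase i₀, y (p.1 i) := fun y =>
              (Finset.mul_prod_erase Finset.univ _ (Finset.mem_univ i₀)).symm
            have hR1 : ∏ i ∈ Finset.univ.erase i₀, x₁ (p.1 i)
                = ∏ i ∈ Finset.univ.erase i₀, x (p.1 i) :=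
              Finset.prod_congr rfl fun i hi => by
                have hne : i ≠ i₀ := (Finset.mem_erase.1 hi).1
                exact hx₁g _ (fun hh => hne (pinj (hh.trans hi₀.symm))) (hpf i)
            have hR2 : ∏ i ∈ Finset.univ.erase i₀, x₂ (p.1 i)
                = ∏ i ∈ Finset.univ.erase i₀, x (p.1 i) :=
              Finset.prod_congr rfl fun i hi => by
                have hne : i ≠ i₀ := (Finset.mem_erase.1 hi).1
                exact hx₂g _ (fun hh => hne (pinj (hh.trans hi₀.symm))) (hpf i)
            rw [hfac x, hfac x₁, hfac x₂, hR1, hR2, hi₀, hx₁e, hx₂e]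
            field_simp
            ring
        · by_cases hpf : ∃ j, p.1 j = f
          · obtain ⟨j₀, hj₀⟩ := hpf
            push_neg at hpe
            have hfac : ∀ y : G.E → ℝ, ∏ i, y (p.1 i)
                = y (p.1 j₀) * ∏ i ∈ Finset.univ.erase j₀, y (p.1 i) := fun y =>
              (Finset.mul_prod_erase Finset.univ _ (Finset.mem_univ j₀)).symm
            have hR1 : ∏ i ∈ Finset.univ.erase j₀, x₁ (p.1 i)
                = ∏ i ∈ Finset.univ.erase j₀, x (p.1 i) :=
              Finset.prod_congr rfl fun i hi => by
                have hne : i ≠ j₀ := (Finset.mem_erase.1 hi).1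
                exact hx₁g _ (hpe i) (fun hh => hne (pinj (hh.trans hj₀.symm)))
            have hR2 : ∏ i ∈ Finset.univ.erase j₀, x₂ (p.1 i)
                = ∏ i ∈ Finset.univ.erase j₀, x (p.1 i) :=
              Finset.prod_congr rfl fun i hi => by
                have hne : i ≠ j₀ := (Finset.mem_erase.1 hi).1
                exact hx₂g _ (hpe i) (fun hh => hne (pinj (hh.trans hj₀.symm)))
            rw [hfac x, hfac x₁, hfac x₂, hR1, hR2, hj₀, hx₁f, hx₂f]
            field_simp
            ring
          · push_neg at hpe
            push_neg at hpf
            have h1 : ∏ i, x₁ (p.1 i) = ∏ i, x (p.1 i) :=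
              Finset.prod_congr rfl fun i _ => hx₁g _ (hpe i) (hpf i)
            have h2 : ∏ i, x₂ (p.1 i) = ∏ i, x (p.1 i) :=
              Finset.prod_congr rfl fun i _ => hx₂g _ (hpe i) (hpf i)
            rw [h1, h2]
            field_simp
      have hc₁ : (0:ℝ) ≤ x e / (x e + x f) := div_nonneg ha.le hab.le
      have hc₂ : (0:ℝ) ≤ x f / (x e + x f) := div_nonneg hb.le hab.le
      have hih₁ := ih G hloop x₁ hx₁nn hcard₁
      have hih₂ := ih G hloop x₂ hx₂nn hcard₂
      rw [hs₁] at hih₁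
      rw [hs₂] at hih₂
      calc ∑ p : {p : Fin k → G.E // G.IsPath p}, ∏ i, x (p.1 i)
          = ∑ p : {p : Fin k → G.E // G.IsPath p},
              (x e / (x e + x f) * ∏ i, x₁ (p.1 i)
                + x f / (x e + x f) * ∏ i, x₂ (p.1 i)) :=
            Finset.sum_congr rfl fun p _ => hpp p
        _ = x e / (x e + x f) * ∑ p : {p : Fin k → G.E // G.IsPath p}, ∏ i, x₁ (p.1 i)
            + x f / (x e + x f) * ∑ p : {p : Fin k → G.E // G.IsPath p}, ∏ i, x₂ (p.1 i) := by
            rw [Finset.sum_add_distrib, Finset.mul_sum, Finset.mul_sum]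
        _ ≤ x e / (x e + x f) * (k * ((∑ g, x g) / k) ^ k)
            + x f / (x e + x f) * (k * ((∑ g, x g) / k) ^ k) :=
            add_le_add (mul_le_mul_of_nonneg_left hih₁ hc₁)
              (mul_le_mul_of_nonneg_left hih₂ hc₂)
        _ = k * ((∑ g, x g) / k) ^ k := by
            have hab' : x e + x f ≠ 0 := ne_of_gt hab
            field_simp

end CtAux

/-- (Bonus theorem.) For a subsemiring `ℚ≥0 ⊆ S ⊆ ℝ≥0`, `N ∈ S` with
`N > 0`, and `k ≥ 1`, the supremum of `ct^k` over all finite `S`-labelled directed graphs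
of weight `N` without loops of length `< k` equals `k·(N/k)^k`, and it is achieved by the
`S`-labelled loop of length `k` on `k` pairwise distinct vertices all of whose labels
equal `N/k`. -/
theorem sup_ct_eq_of_no_short_loops (S : Subsemiring ℝ) (hS : ∀ x ∈ S, 0 ≤ x)
    (hQ : ∀ q : ℚ, 0 ≤ q → (q : ℝ) ∈ S)
    (N : ℝ) (hN : N ∈ S) (hNpos : 0 < N) (k : ℕ) (hk : 1 ≤ k) :
    sSup {x : ℝ | ∃ G : LGraph ℝ, Finite G.E ∧ (∀ e, G.l e ∈ S) ∧
        (∀ e, G.l e ≠ 0) ∧ G.NoRepeats ∧ G.wt = N ∧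
        (∀ (m : ℕ) (q : Fin m → G.E), m < k → ¬ G.IsLoop q) ∧ G.ct k = x} =
      k * (N / k) ^ k ∧
    (let G₀ : LGraph ℝ :=
      ⟨Fin k, Fin k, id,
       fun i => ⟨((i : ℕ) + 1) % k, Nat.mod_lt _ (by omega)⟩, fun _ => N / k⟩
     Finite G₀.E ∧ (∀ e, G₀.l e ∈ S) ∧ (∀ e, G₀.l e ≠ 0) ∧ G₀.NoRepeats ∧
     G₀.wt = N ∧ (∀ (m : ℕ) (q : Fin m → G₀.E), m < k → ¬ G₀.IsLoop q) ∧
     G₀.ct k = k * (N / k) ^ k) := by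
  classical
  have hk0 : 0 < k := hk
  have hkR : (0:ℝ) < (k:ℝ) := by exact_mod_cast hk0
  set C : LGraph ℝ :=
      ⟨Fin k, Fin k, id,
       fun i => ⟨((i : ℕ) + 1) % k, Nat.mod_lt _ (by omega)⟩, fun _ => N / k⟩ with hC
  -- facts about the cycle graph
  have hfin : Finite C.E := inferInstanceAs (Finite (Fin k))
  have hl : ∀ e : C.E, C.l e ∈ S := by
    intro _e
    show N / (k:ℝ) ∈ S
    have h1 : ((1 / (k:ℚ) : ℚ) : ℝ) ∈ S := hQ _ (by positivity)
    have h2 : ((1 / (k:ℚ) : ℚ) : ℝ) = 1 / (k:ℝ) := by push_cast; ring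
    rw [h2] at h1
    have := S.mul_mem hN h1
    rwa [mul_one_div] at this
  have hlne : ∀ e : C.E, C.l e ≠ 0 := fun _ => div_ne_zero (ne_of_gt hNpos) (ne_of_gt hkR)
  have hnr : C.NoRepeats := fun e f hs _ => hs
  have hwt : C.wt = N := by
    show (∑ᶠ _e : Fin k, N / (k:ℝ)) = N
    rw [finsum_eq_sum_of_fintype, Finset.sum_const, Finset.card_univ, Fintype.card_fin,
      nsmul_eq_mul, mul_div_cancel₀ N (ne_of_gt hkR)]
  have hval : ∀ (m : ℕ) (q : Fin m → Fin k), C.IsPath q →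
      ∀ (j : ℕ) (hj : j < m) (h0 : 0 < m),
        ((q ⟨j, hj⟩ : Fin k) : ℕ) = (((q ⟨0, h0⟩ : Fin k) : ℕ) + j) % k := by
    intro m q hq j
    induction j with
    | zero =>
      intro hj h0
      rw [Nat.add_zero, Nat.mod_eq_of_lt (Fin.is_lt _)]
    | succ j ihj =>
      intro hj h0
      have hstep : ((q ⟨j + 1, hj⟩ : Fin k) : ℕ) = (((q ⟨j, by omega⟩ : Fin k) : ℕ) + 1) % k :=
        (congrArg Fin.val (hq j hj)).symm
      rw [hstep, ihj (by omega) h0, Nat.mod_add_mod, Nat.add_assoc]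
  have hloops : ∀ (m : ℕ) (q : Fin m → C.E), m < k → ¬ C.IsLoop q := by
    intro m q hm hql
    obtain ⟨hpath, hm0, heq⟩ := hql
    have h1 : ((q ⟨0, hm0⟩ : Fin k) : ℕ)
        = (((q ⟨m - 1, by omega⟩ : Fin k) : ℕ) + 1) % k := congrArg Fin.val heq
    have h2 := hval m q hpath (m - 1) (by omega) hm0
    rw [h2, Nat.mod_add_mod] at h1
    have h1' : ((q ⟨0, hm0⟩ : Fin k) : ℕ) = (((q ⟨0, hm0⟩ : Fin k) : ℕ) + m) % k := by
      rw [h1]; congr 1; omega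
    have hq0 : ((q ⟨0, hm0⟩ : Fin k) : ℕ) < k := Fin.is_lt _
    rcases Nat.lt_or_ge (((q ⟨0, hm0⟩ : Fin k) : ℕ) + m) k with h | h
    · rw [Nat.mod_eq_of_lt h] at h1'
      omega
    · rw [Nat.mod_eq_sub_mod h,
        Nat.mod_eq_of_lt (by omega : ((q ⟨0, hm0⟩ : Fin k) : ℕ) + m - k < k)] at h1'
      omega
  have hcard : Fintype.card {p : Fin k → C.E // C.IsPath p} = k := by
    have EQ : {p : Fin k → C.E // C.IsPath p} ≃ Fin k :=
      { toFun := fun p => p.1 ⟨0, hk0⟩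
        invFun := fun c =>
          ⟨fun i => (⟨((c : ℕ) + (i : ℕ)) % k, Nat.mod_lt _ hk0⟩ : Fin k), by
            intro j hj
            exact Fin.ext (show ((((c : ℕ) + j) % k) + 1) % k = ((c : ℕ) + (j + 1)) % k by
              rw [Nat.mod_add_mod, Nat.add_assoc])⟩
        left_inv := by
          intro p
          apply Subtype.ext
          funext i
          exact Fin.ext ((hval k p.1 p.2 (i : ℕ) i.isLt hk0).symm)
        right_inv := by
          intro c
          exact Fin.ext (show ((c : ℕ) + 0) % k = (c : ℕ) by
            rw [Nat.add_zero, Nat.mod_eq_of_lt c.isLt]) }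
    rw [Fintype.card_congr EQ, Fintype.card_fin]
  have hct : C.ct k = k * (N / k) ^ k := by
    show (∑ᶠ p : {p : Fin k → C.E // C.IsPath p}, ∏ i, C.l (p.1 i)) = k * (N / k) ^ k
    rw [finsum_eq_sum_of_fintype]
    have h1 : ∀ p : {p : Fin k → C.E // C.IsPath p},
        ∏ i, C.l (p.1 i) = (N / (k:ℝ)) ^ k := by
      intro p
      calc ∏ i, C.l (p.1 i) = ∏ _i : Fin k, (N / (k:ℝ)) := rfl
        _ = (N / (k:ℝ)) ^ k := by
            rw [Finset.prod_const, Finset.card_univ, Fintype.card_fin]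
    rw [Finset.sum_congr rfl fun p _ => h1 p, Finset.sum_const, Finset.card_univ, hcard,
      nsmul_eq_mul]
  -- upper bound
  have hub : ∀ y ∈ {x : ℝ | ∃ G : LGraph ℝ, Finite G.E ∧ (∀ e, G.l e ∈ S) ∧
        (∀ e, G.l e ≠ 0) ∧ G.NoRepeats ∧ G.wt = N ∧
        (∀ (m : ℕ) (q : Fin m → G.E), m < k → ¬ G.IsLoop q) ∧ G.ct k = x},
      y ≤ k * (N / k) ^ k := by
    rintro y ⟨G, hfinG, hlS, _hlne, _hnrG, hwtG, hloopsG, hcty⟩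
    letI : Fintype G.E := Fintype.ofFinite _
    have hwteq : (∑ e, G.l e) = N := by
      rw [← hwtG]
      exact (finsum_eq_sum_of_fintype G.l).symm
    have hb := CtAux.key k hk (Fintype.card G.E) G hloopsG G.l (fun e => hS _ (hlS e))
      (by rw [← Finset.card_univ]; exact Finset.card_le_card (Finset.filter_subset _ _))
    rw [hwteq] at hb
    rw [← hcty]
    calc G.ct k = ∑ p : {p : Fin k → G.E // G.IsPath p}, ∏ i, G.l (p.1 i) :=
          finsum_eq_sum_of_fintype _
      _ ≤ k * (N / k) ^ k := hb
  have hmem : k * (N / k) ^ k ∈ {x : ℝ | ∃ G : LGraph ℝ, Finite G.E ∧ (∀ e, G.l e ∈ S) ∧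
        (∀ e, G.l e ≠ 0) ∧ G.NoRepeats ∧ G.wt = N ∧
        (∀ (m : ℕ) (q : Fin m → G.E), m < k → ¬ G.IsLoop q) ∧ G.ct k = x} :=
    ⟨C, hfin, hl, hlne, hnr, hwt, hloops, hct⟩
  refine ⟨le_antisymm (csSup_le ⟨_, hmem⟩ hub) (le_csSup ⟨_, fun y hy => hub y hy⟩ hmem), ?_⟩
  exact ⟨hfin, hl, hlne, hnr, hwt, hloops, hct⟩
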